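/- The derivative of the standing wave solves the linearized Allen–Cahn equation and decays exponentially: Assume W satisfies the double-well assumptions and let q be the standing wave. Then q' is twice continuously differentiable, q'(s) > 0 for all s, (q')''(s) = W''(q(s)) q'(s) for all s ∈ ℝ, and there is a constant C > 0 such that 0 < q'(s) ≤ C exp(−|s|/C) for all s ∈ ℝ. -/

import Mathlib

open Set Filter Topology

noncomputable section

def DoubleWell (W : ℝ → ℝ) : Prop :=
  ContDiff ℝ 3 W ∧
  (∀ u ∈ Set.Icc (-1:ℝ) 1, 0 ≤ W u) ∧
  W (-1) = 0 ∧ W 1 = 0 ∧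
  (∀ u ∈ Set.Ioo (-1:ℝ) 1, 0 < W u) ∧
  deriv W (-1) = 0 ∧ deriv W 0 = 0 ∧ deriv W 1 = 0 ∧
  (∀ u ∈ Set.Ioo (-1:ℝ) 0, 0 < deriv W u) ∧
  (∀ u ∈ Set.Ioo (0:ℝ) 1, deriv W u < 0) ∧
  0 < deriv (deriv W) (-1) ∧ 0 < deriv (deriv W) 1 ∧ deriv (deriv W) 0 < 0

def StandingWave (W q : ℝ → ℝ) : Prop :=
  ContDiff ℝ 2 q ∧ StrictMono q ∧ (∀ s, q s ∈ Set.Ioo (-1:ℝ) 1) ∧ q 0 = 0 ∧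
  (∀ s, deriv (deriv q) s = deriv W (q s)) ∧
  Filter.Tendsto q Filter.atTop (nhds 1) ∧ Filter.Tendsto q Filter.atBot (nhds (-1))

/-!
Multiplying `q'' = W'(q)` by `q'` shows that the energy `q'² - 2 W(q)` is constant. It is `≥ 0`
since `W(q) → 0` at `+∞`, and it is not `> 0`, since then `q' ≥ √energy > 0` would push `q`
out of `(-1, 1)`. Hence `q'² = 2 W(q) > 0`. Near a nondegenerate well `p = ±1`, Taylor's
theorem gives `W'(u) (u - p) ≳ (u - p)²` and `W(u) ≲ (u - p)²`, so in the tail where `q ≈ p`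
the function `q'` satisfies `(q')' ≤ -k q'` and decays exponentially; on the compact middle
part it is bounded.
-/

open Real Asymptotics

theorem mul_exp_le_of_deriv_le_neg_mul {v : ℝ → ℝ} (hv : Differentiable ℝ v) {k S : ℝ}
    (h : ∀ s ≥ S, deriv v s ≤ -k * v s) {s : ℝ} (hs : S ≤ s) :
    v s * exp (k * s) ≤ v S * exp (k * S) := by
  have hder (t : ℝ) : HasDerivAt (fun t ↦ v t * exp (k * t))
      ((deriv v t + k * v t) * exp (k * t)) t :=
    ((hv t).hasDerivAt.mul ((hasDerivAt_id t).const_mul k).exp).congr_deriv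
      (by simp only [id_eq, mul_one]; ring)
  refine antitoneOn_of_hasDerivWithinAt_nonpos (convex_Ici S)
    (fun t _ ↦ (hder t).continuousAt.continuousWithinAt)
    (fun t _ ↦ (hder t).hasDerivWithinAt) (fun t ht ↦ ?_) self_mem_Ici hs hs
  rw [interior_Ici] at ht
  exact mul_nonpos_of_nonpos_of_nonneg (by linarith [h t ht.le]) (exp_pos _).le

theorem exists_eventually_le_mul_exp_neg_div {v : ℝ → ℝ} (hv : Differentiable ℝ v) {k : ℝ}
    (hk : 0 < k) (h : ∀ᶠ s in atTop, deriv v s ≤ -k * v s) :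
    ∃ C > 0, ∀ᶠ s in atTop, v s ≤ C * exp (-s / C) := by
  obtain ⟨S, hS⟩ := eventually_atTop.mp h
  set A := v S * exp (k * S)
  refine ⟨max A k⁻¹, by positivity, ?_⟩
  filter_upwards [eventually_ge_atTop S, eventually_ge_atTop 0] with s hSs hs
  have hkC : (max A k⁻¹)⁻¹ ≤ k := inv_le_of_inv_le₀ hk (le_max_right _ _)
  calc v s = v s * exp (k * s) * exp (-k * s) := by
        rw [mul_assoc, ← exp_add]; simp
    _ ≤ A * exp (-k * s) := by
        gcongr; exact mul_exp_le_of_deriv_le_neg_mul hv hS hSs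
    _ ≤ max A k⁻¹ * exp (-s / max A k⁻¹) := by
        gcongr
        · exact le_max_left _ _
        · rw [neg_div, neg_mul, neg_le_neg_iff, div_eq_mul_inv, mul_comm]
          exact mul_le_mul_of_nonneg_right hkC hs

theorem exists_eventually_le_mul_exp_neg_div_of_sq_le {v r : ℝ → ℝ} (hv : Differentiable ℝ v)
    {a b : ℝ} (ha : 0 < a) (hb : 0 < b)
    (h : ∀ᶠ s in atTop, 0 ≤ v s ∧ 0 ≤ r s ∧ deriv v s ≤ -a * r s ∧ v s ^ 2 ≤ b * r s ^ 2) :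
    ∃ C > 0, ∀ᶠ s in atTop, v s ≤ C * exp (-s / C) := by
  refine exists_eventually_le_mul_exp_neg_div hv (k := a / √b) (by positivity) ?_
  filter_upwards [h] with s ⟨hvs, hrs, hderiv, hsq⟩
  have hle : v s ≤ √b * r s := by
    simpa [sqrt_sq hvs, sqrt_mul hb.le, sqrt_sq hrs] using sqrt_le_sqrt hsq
  calc deriv v s ≤ -a * r s := hderiv
    _ = -(a / √b) * (√b * r s) := by field_simp
    _ ≤ -(a / √b) * v s := by
        rw [neg_mul, neg_mul, neg_le_neg_iff]; gcongr

theorem mul_exp_neg_div_le_mul_exp_neg_div {C C' x : ℝ} (hC : 0 < C) (hCC' : C ≤ C')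
    (hx : 0 ≤ x) : C * exp (-x / C) ≤ C' * exp (-x / C') := by
  gcongr ?_ * exp ?_
  · linarith
  · exact neg_div C x ▸ neg_div C' x ▸ neg_le_neg (div_le_div_of_nonneg_left hx hC hCC')

theorem exists_le_mul_exp_neg_abs_div {v : ℝ → ℝ} (hv : Continuous v)
    (htop : ∃ C > 0, ∀ᶠ s in atTop, v s ≤ C * exp (-s / C))
    (hbot : ∃ C > 0, ∀ᶠ s in atTop, v (-s) ≤ C * exp (-s / C)) :
    ∃ C > 0, ∀ s, v s ≤ C * exp (-|s| / C) := by
  obtain ⟨C₁, hC₁, h₁⟩ := htop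
  obtain ⟨C₂, hC₂, h₂⟩ := hbot
  obtain ⟨S, hS⟩ := eventually_atTop.mp ((h₁.and h₂).and (eventually_ge_atTop 0))
  obtain ⟨B, hB⟩ := (isCompact_Icc (a := -S) (b := S)).bddAbove_image hv.continuousOn
  set C := max (max C₁ C₂) (max S (B * exp 1))
  have hC₁C : C₁ ≤ C := (le_max_left _ _).trans (le_max_left _ _)
  have hC₂C : C₂ ≤ C := (le_max_right _ _).trans (le_max_left _ _)
  refine ⟨C, hC₁.trans_le hC₁C, fun s ↦ ?_⟩
  rcases le_or_gt S |s| with hs | hs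
  · rcases le_total 0 s with h0 | h0
    · rw [abs_of_nonneg h0] at hs ⊢
      exact ((hS s hs).1.1).trans (mul_exp_neg_div_le_mul_exp_neg_div hC₁ hC₁C h0)
    · rw [abs_of_nonpos h0] at hs ⊢
      simpa using ((hS (-s) hs).1.2).trans
        (mul_exp_neg_div_le_mul_exp_neg_div hC₂ hC₂C (neg_nonneg.2 h0))
  · have hsS : s ∈ Icc (-S) S := abs_le.mp hs.le
    calc v s ≤ B := hB (mem_image_of_mem v hsS)
      _ = B * exp 1 * exp (-1) := by rw [mul_assoc, ← exp_add]; simp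
      _ ≤ C * exp (-|s| / C) := by
        gcongr
        · exact (le_max_right _ _).trans (le_max_right _ _)
        · rw [neg_div, neg_le_neg_iff, div_le_one (hC₁.trans_le hC₁C)]
          exact hs.le.trans ((le_max_left _ _).trans (le_max_right _ _))

theorem eventually_quadratic_bounds_of_deriv_deriv_pos {W : ℝ → ℝ} {p : ℝ}
    (hW : Differentiable ℝ W) (hW' : DifferentiableAt ℝ (deriv W) p) (h0 : W p = 0)
    (h1 : deriv W p = 0) (h2 : 0 < deriv (deriv W) p) :
    ∀ᶠ u in 𝓝 p, deriv (deriv W) p / 2 * (u - p) ^ 2 ≤ deriv W u * (u - p) ∧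
      W u ≤ deriv (deriv W) p * (u - p) ^ 2 := by
  set c := deriv (deriv W) p
  have hW'o : (fun u ↦ deriv W u - c * (u - p)) =o[𝓝 p] fun u ↦ (u - p) ^ 1 := by
    simpa [h1, mul_comm] using hW'.hasDerivAt.isLittleO
  have hWo : (fun u ↦ W u - c / 2 * (u - p) ^ 2) =o[𝓝 p] fun u ↦ (u - p) ^ 2 := by
    have hderiv (u : ℝ) : HasDerivAt (fun u ↦ W u - c / 2 * (u - p) ^ 2)
        (deriv W u - c * (u - p)) u :=
      ((hW u).hasDerivAt.sub ((((hasDerivAt_id u).sub_const p).pow 2).const_mul (c / 2)))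
        |>.congr_deriv (by simp only [id_eq, Nat.add_one_sub_one, pow_one, mul_one]; ring)
    simpa [h0] using Convex.isLittleO_pow_succ_real convex_univ (mem_univ p)
      (fun u _ ↦ (hderiv u).hasDerivWithinAt) (by simpa using hW'o)
  filter_upwards [hW'o.def (half_pos h2), hWo.def (half_pos h2)] with u hu₁ hu₂
  simp only [norm_eq_abs, pow_one, abs_pow, sq_abs] at hu₁ hu₂
  constructor
  · have := neg_abs_le ((deriv W u - c * (u - p)) * (u - p))
    rw [abs_mul] at this
    nlinarith [mul_le_mul_of_nonneg_right hu₁ (abs_nonneg (u - p)), sq_abs (u - p)]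
  · linarith [le_abs_self (W u - c / 2 * (u - p) ^ 2)]

theorem sq_deriv_sub_two_mul_comp_eq {W q : ℝ → ℝ} (hW : Differentiable ℝ W)
    (hq : Differentiable ℝ q) (hq' : Differentiable ℝ (deriv q))
    (hode : ∀ s, deriv (deriv q) s = deriv W (q s)) (s t : ℝ) :
    deriv q s ^ 2 - 2 * W (q s) = deriv q t ^ 2 - 2 * W (q t) := by
  have hderiv (s : ℝ) : HasDerivAt (fun s ↦ deriv q s ^ 2 - 2 * W (q s)) 0 s :=
    (((hq' s).hasDerivAt.pow 2).sub
      (((hW (q s)).hasDerivAt.comp s (hq s).hasDerivAt).const_mul 2)).congr_deriv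
      (by rw [hode]; ring)
  exact is_const_of_deriv_eq_zero (fun s ↦ (hderiv s).differentiableAt)
    (fun s ↦ (hderiv s).deriv) s t

theorem DoubleWell.contDiff_deriv {W : ℝ → ℝ} (hW : DoubleWell W) : ContDiff ℝ 2 (deriv W) :=
  hW.1.deriv' (n := 2)

namespace StandingWave

variable {W q : ℝ → ℝ}

theorem differentiable (hq : StandingWave W q) : Differentiable ℝ q :=
  hq.1.differentiable two_ne_zero

theorem differentiable_deriv (hq : StandingWave W q) : Differentiable ℝ (deriv q) :=
  (hq.1.deriv' (n := 1)).differentiable one_ne_zero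

theorem mem_Ioo (hq : StandingWave W q) (s : ℝ) : q s ∈ Ioo (-1) 1 := hq.2.2.1 s

theorem deriv_deriv (hq : StandingWave W q) (s : ℝ) : deriv (deriv q) s = deriv W (q s) :=
  hq.2.2.2.2.1 s

theorem tendsto_atTop (hq : StandingWave W q) : Tendsto q atTop (𝓝 1) := hq.2.2.2.2.2.1

theorem tendsto_atBot (hq : StandingWave W q) : Tendsto q atBot (𝓝 (-1)) := hq.2.2.2.2.2.2

theorem contDiff_deriv (hW : DoubleWell W) (hq : StandingWave W q) :
    ContDiff ℝ 2 (deriv q) := by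
  rw [show (2 : WithTop ℕ∞) = 1 + 1 from rfl, contDiff_succ_iff_deriv, funext hq.deriv_deriv]
  exact ⟨hq.differentiable_deriv, by simp,
    (hW.contDiff_deriv.of_le one_le_two).comp (hq.1.of_le one_le_two)⟩

theorem deriv_deriv_deriv (hW : DoubleWell W) (hq : StandingWave W q) (s : ℝ) :
    deriv (deriv (deriv q)) s = deriv (deriv W) (q s) * deriv q s := by
  rw [funext hq.deriv_deriv]
  exact ((hW.contDiff_deriv.differentiable two_ne_zero (q s)).hasDerivAt.comp s
    (hq.differentiable s).hasDerivAt).deriv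

theorem deriv_nonneg (hq : StandingWave W q) (s : ℝ) : 0 ≤ deriv q s :=
  hq.2.1.monotone.deriv_nonneg

theorem sq_deriv (hW : DoubleWell W) (hq : StandingWave W q) (s : ℝ) :
    deriv q s ^ 2 = 2 * W (q s) := by
  obtain ⟨hW3, hWnn, -, hW1, -⟩ := hW
  have hWdiff : Differentiable ℝ W := hW3.differentiable (by norm_num)
  set c := deriv q 0 ^ 2 - 2 * W (q 0)
  have hE (s : ℝ) : deriv q s ^ 2 - 2 * W (q s) = c :=
    sq_deriv_sub_two_mul_comp_eq hWdiff hq.differentiable hq.differentiable_deriv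
      hq.deriv_deriv s 0
  have hWq (s : ℝ) : 0 ≤ W (q s) := hWnn _ (Ioo_subset_Icc_self (hq.mem_Ioo s))
  have hc_nonneg : 0 ≤ c := by
    have hlim : Tendsto (fun s ↦ -2 * W (q s)) atTop (𝓝 0) := by
      simpa [hW1] using ((hWdiff.continuous.tendsto 1).comp hq.tendsto_atTop).const_mul (-2)
    exact le_of_tendsto' hlim fun s ↦ by nlinarith [hE s]
  have hc_nonpos : c ≤ 0 := by
    by_contra! hc
    have hslope (s : ℝ) : √c ≤ deriv q s :=
      (sqrt_le_sqrt (by linarith [hE s, hWq s])).trans_eq (sqrt_sq (hq.deriv_nonneg s))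
    have hgrowth := mul_sub_le_image_sub_of_le_deriv hq.differentiable hslope
      (x := 0) (y := 2 / √c) (by positivity)
    rw [sub_zero, mul_div_cancel₀ _ (sqrt_pos.2 hc).ne'] at hgrowth
    linarith [(hq.mem_Ioo 0).1, (hq.mem_Ioo (2 / √c)).2]
  linarith [hE s]

theorem deriv_pos (hW : DoubleWell W) (hq : StandingWave W q) (s : ℝ) : 0 < deriv q s := by
  have hsq := hq.sq_deriv hW s
  obtain ⟨-, -, -, -, hWpos, -⟩ := hW
  have hWq := hWpos (q s) (hq.mem_Ioo s)
  exact (hq.deriv_nonneg s).lt_of_ne fun h ↦ by rw [← h] at hsq; linarith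

theorem exists_deriv_le_mul_exp_neg_div_atTop (hW : DoubleWell W) (hq : StandingWave W q) :
    ∃ C > 0, ∀ᶠ s in atTop, deriv q s ≤ C * exp (-s / C) := by
  have hW'diff := hW.contDiff_deriv.differentiable two_ne_zero
  have hsq := hq.sq_deriv hW
  obtain ⟨hW3, -, -, hW1, -, -, -, hW'1, -, -, -, hW''1, -⟩ := hW
  have hbounds := hq.tendsto_atTop.eventually <| eventually_quadratic_bounds_of_deriv_deriv_pos
    (hW3.differentiable (by norm_num)) (hW'diff 1) hW1 hW'1 hW''1
  refine exists_eventually_le_mul_exp_neg_div_of_sq_le hq.differentiable_deriv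
    (r := fun s ↦ 1 - q s) (half_pos hW''1) (mul_pos two_pos hW''1) ?_
  filter_upwards [hbounds] with s ⟨hW'q, hWq⟩
  have hq1 : q s < 1 := (hq.mem_Ioo s).2
  refine ⟨hq.deriv_nonneg s, by linarith, ?_, ?_⟩
  · rw [hq.deriv_deriv]
    nlinarith
  · rw [hsq]
    nlinarith

theorem exists_deriv_le_mul_exp_neg_div_atBot (hW : DoubleWell W) (hq : StandingWave W q) :
    ∃ C > 0, ∀ᶠ s in atTop, deriv q (-s) ≤ C * exp (-s / C) := by
  have hW'diff := hW.contDiff_deriv.differentiable two_ne_zero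
  have hsq := hq.sq_deriv hW
  obtain ⟨hW3, -, hW1, -, -, hW'1, -, -, -, -, hW''1, -⟩ := hW
  have hbounds := (hq.tendsto_atBot.comp tendsto_neg_atTop_atBot).eventually <|
    eventually_quadratic_bounds_of_deriv_deriv_pos (hW3.differentiable (by norm_num))
      (hW'diff (-1)) hW1 hW'1 hW''1
  refine exists_eventually_le_mul_exp_neg_div_of_sq_le
    (hq.differentiable_deriv.comp differentiable_neg) (r := fun s ↦ q (-s) + 1)
    (half_pos hW''1) (mul_pos two_pos hW''1) ?_
  filter_upwards [hbounds] with s ⟨hW'q, hWq⟩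
  simp only [Function.comp_apply, sub_neg_eq_add] at hW'q hWq
  have hq1 : -1 < q (-s) := (hq.mem_Ioo (-s)).1
  refine ⟨hq.deriv_nonneg (-s), by linarith, ?_, ?_⟩
  · rw [deriv_comp_neg, hq.deriv_deriv]
    nlinarith
  · rw [hsq]
    nlinarith

end StandingWave

/-- The derivative of the standing wave is C², positive, solves the linearized
Allen–Cahn equation, and decays exponentially. -/
theorem standing_wave_deriv_linearized (W q : ℝ → ℝ) (hW : DoubleWell W)
    (hq : StandingWave W q) :
    ContDiff ℝ 2 (deriv q) ∧
    (∀ s, 0 < deriv q s) ∧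
    (∀ s, deriv (deriv (deriv q)) s = deriv (deriv W) (q s) * deriv q s) ∧
    ∃ C > 0, ∀ s : ℝ, deriv q s ≤ C * Real.exp (-|s| / C) :=
  ⟨hq.contDiff_deriv hW, hq.deriv_pos hW, hq.deriv_deriv_deriv hW,
    exists_le_mul_exp_neg_abs_div (hq.contDiff_deriv hW).continuous
      (hq.exists_deriv_le_mul_exp_neg_div_atTop hW) (hq.exists_deriv_le_mul_exp_neg_div_atBot hW)⟩

end
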